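/- Let 𝒥 be the ideal on ω^{<ω} of all sets a with π(a) finite, where π(a) = {f ∈ ω^ω : f↾n ∈ a for infinitely many n}. Then 𝒥 cannot be extended to an F_σ ideal; equivalently, for every lower semicontinuous submeasure φ on ω^{<ω} with φ(ω^{<ω}) = ∞ there is a ∈ 𝒥 with φ(a) = ∞. -/
import Mathlib


/-- `π(a) = {f ∈ ω^ω : f↾n ∈ a for infinitely many n}`. -/
def piSet (a : Set (List ℕ)) : Set (ℕ → ℕ) :=
  {f | {n | (List.range n).map f ∈ a}.Infinite}

/-- A lower semicontinuous submeasure on `ω^{<ω}`. -/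
def IsLSC (φ : Set (List ℕ) → ℕ∞) : Prop :=
  φ ∅ = 0 ∧
  (∀ A B, A ⊆ B → φ A ≤ φ B) ∧
  (∀ A B, φ (A ∪ B) ≤ φ A + φ B) ∧
  (∀ A, φ A = ⨆ (F : Finset (List ℕ)) (_ : ↑F ⊆ A), φ ↑F)

namespace Stmt15Aux

/-- restriction of `g` to length `m` -/
def res (g : ℕ → ℕ) (m : ℕ) : List ℕ := (List.range m).map g

lemma res_length (g : ℕ → ℕ) (m : ℕ) : (res g m).length = m := by simp [res]

lemma res_injective (g : ℕ → ℕ) : Function.Injective (res g) := by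
  intro a b h
  have := congrArg List.length h
  simpa [res] using this

lemma res_prefix (g : ℕ → ℕ) {N m : ℕ} (h : N ≤ m) :
    (res g m).take N = res g N := by
  simp [res, ← List.map_take, List.take_range, Nat.min_eq_left h]

lemma res_succ (g : ℕ → ℕ) (m : ℕ) : res g (m + 1) = res g m ++ [g m] := by
  simp [res, List.range_succ]

/-- If `X ⊆ Y ∪ Z`, `φ X = ⊤` and `φ Z ≠ ⊤`, then `φ Y = ⊤`. -/
lemma top_of_subset {φ : Set (List ℕ) → ℕ∞} (hφ : IsLSC φ)
    {X Y Z : Set (List ℕ)} (hX : φ X = ⊤) (hsub : X ⊆ Y ∪ Z) (hZ : φ Z ≠ ⊤) :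
    φ Y = ⊤ := by
  have h1 : φ X ≤ φ (Y ∪ Z) := hφ.2.1 _ _ hsub
  have h2 : φ (Y ∪ Z) ≤ φ Y + φ Z := hφ.2.2.1 _ _
  have h3 : φ Y + φ Z = ⊤ := by
    have : (⊤ : ℕ∞) ≤ φ Y + φ Z := hX ▸ (h1.trans h2)
    exact top_le_iff.mp this
  rcases WithTop.add_eq_top.mp h3 with h | h
  · exact h
  · exact absurd h hZ

/-- Key construction lemma. -/
lemma key {φ : Set (List ℕ) → ℕ∞} (hφ : IsLSC φ)
    (A : ℕ → Set (List ℕ)) (hA : ∀ N, φ (A N) = ⊤)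
    (S : Set (ℕ → ℕ)) (hS : S.Finite)
    (hsep : ∀ g, g ∉ S → ∃ d, ∀ N, d < N → ∀ m, res g m ∈ A N → m ≤ d) :
    ∃ a : Set (List ℕ), (piSet a).Finite ∧ φ a = ⊤ := by
  have hex : ∀ N : ℕ, ∃ F : Finset (List ℕ), ↑F ⊆ A N ∧ (N : ℕ∞) < φ ↑F := by
    intro N
    have h1 : (N : ℕ∞) < φ (A N) := by
      rw [hA N]; exact lt_of_le_of_ne le_top (WithTop.coe_ne_top)
    rw [hφ.2.2.2 (A N)] at h1
    obtain ⟨F, hF⟩ := lt_iSup_iff.mp h1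
    obtain ⟨hsub, hlt⟩ := lt_iSup_iff.mp hF
    exact ⟨F, hsub, hlt⟩
  choose F hF1 hF2 using hex
  set a : Set (List ℕ) := ⋃ N, (F N : Set (List ℕ)) with ha
  have hatop : φ a = ⊤ := by
    have hle : ∀ N : ℕ, (N : ℕ∞) < φ a := fun N =>
      lt_of_lt_of_le (hF2 N) (hφ.2.1 _ _ (Set.subset_iUnion (fun N => ((F N : Set (List ℕ)))) N))
    by_contra h
    obtain ⟨n, hn⟩ := WithTop.ne_top_iff_exists.mp h
    have hn' : (n : ℕ∞) = φ a := by exact_mod_cast hn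
    have h2 := hle n
    rw [← hn'] at h2
    exact lt_irrefl _ h2
  refine ⟨a, Set.Finite.subset hS ?_, hatop⟩
  intro g hg
  by_contra hgS
  obtain ⟨d, hd⟩ := hsep g hgS
  have hginf : {n | res g n ∈ a}.Infinite := hg
  have hsub : {n | res g n ∈ a} ⊆
      Set.Iic d ∪ res g ⁻¹' (⋃ N ∈ Finset.range (d + 1), (F N : Set (List ℕ))) := by
    intro m hm
    obtain ⟨_, ⟨N, rfl⟩, hmN⟩ := hm
    by_cases hN : N ≤ d
    · right
      exact Set.mem_iUnion₂.mpr ⟨N, Finset.mem_range.mpr (Nat.lt_succ_of_le hN), hmN⟩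
    · left
      exact hd N (lt_of_not_ge hN) m (hF1 N hmN)
  have hfin : (Set.Iic d ∪
      res g ⁻¹' (⋃ N ∈ Finset.range (d + 1), (F N : Set (List ℕ)))).Finite := by
    refine (Set.finite_Iic d).union ?_
    refine Set.Finite.preimage (Function.Injective.injOn (res_injective g)) ?_
    exact Set.Finite.biUnion (Finset.range (d + 1)).finite_toSet (fun N _ => (F N).finite_toSet)
  exact hginf (hfin.subset hsub)

end Stmt15Aux

open Stmt15Aux in
/-- The ideal `𝒥 = {a : π(a) finite}` cannot be extended to an `F_σ` ideal: every
lower semicontinuous submeasure `φ` with `φ(ω^{<ω}) = ∞` is infinite on some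
`a ∈ 𝒥`. -/
theorem stmt15 (φ : Set (List ℕ) → ℕ∞) (hφ : IsLSC φ)
    (htop : φ Set.univ = ⊤) :
    ∃ a : Set (List ℕ), (piSet a).Finite ∧ φ a = ⊤ := by
  classical
  by_cases hcase : ∀ s : List ℕ, φ {t | s <+: t} = ⊤ → ∃ k, φ {t | s ++ [k] <+: t} = ⊤
  · -- Case B: an infinite branch of big nodes
    set c : List ℕ → ℕ := fun s =>
      if h : ∃ k, φ {t | s ++ [k] <+: t} = ⊤ then h.choose else 0 with hc
    have hcspec : ∀ s : List ℕ, φ {t | s <+: t} = ⊤ →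
        φ {t | s ++ [c s] <+: t} = ⊤ := by
      intro s hs
      have h := hcase s hs
      simp only [hc, dif_pos h]
      exact h.choose_spec
    let seq : ℕ → List ℕ := fun n => Nat.rec [] (fun _ l => l ++ [c l]) n
    have hseq0 : seq 0 = [] := rfl
    have hseqS : ∀ n, seq (n + 1) = seq n ++ [c (seq n)] := fun n => rfl
    have hbig : ∀ n, φ {t | seq n <+: t} = ⊤ := by
      intro n
      induction n with
      | zero =>
        have : {t : List ℕ | seq 0 <+: t} = Set.univ := by
          ext t; simp [hseq0]
        rw [this]; exact htop
      | succ n ih =>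
        rw [hseqS n]; exact hcspec _ ih
    have hlen : ∀ n, (seq n).length = n := by
      intro n
      induction n with
      | zero => rfl
      | succ n ih => rw [hseqS n]; simp [ih]
    set f : ℕ → ℕ := fun n => c (seq n) with hf
    have hres : ∀ m, res f m = seq m := by
      intro m
      induction m with
      | zero => rfl
      | succ m ih => rw [res_succ, ih, hseqS m]
    refine key hφ (fun N => {t | seq N <+: t}) hbig {f} (Set.finite_singleton f) ?_
    intro g hg
    have hgf : g ≠ f := by simpa using hg
    obtain ⟨d, hd⟩ := Function.ne_iff.mp hgf
    refine ⟨d, fun N hdN m hm => ?_⟩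
    exfalso
    have hpre : seq N <+: res g m := hm
    have hNm : N ≤ m := by
      have := hpre.length_le
      rwa [hlen, res_length] at this
    have heq : seq N = res g N := by
      have h1 := List.prefix_iff_eq_take.mp hpre
      rw [hlen] at h1
      rw [h1, res_prefix g hNm]
    have heq2 : res f N = res g N := by rw [hres]; exact heq
    have : f d = g d := by
      have h0 := heq2
      simp only [res] at h0
      exact List.map_eq_map_iff.mp h0 d (List.mem_range.mpr hdN)
    exact hd this.symm
  · -- Case A: a big node all of whose children are small
    push_neg at hcase
    obtain ⟨s, hsbig, hsmall⟩ := hcase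
    set A : ℕ → Set (List ℕ) := fun N =>
      {t | t = s ∨ ∃ k, N ≤ k ∧ s ++ [k] <+: t} with hA
    have hAtop : ∀ N, φ (A N) = ⊤ := by
      intro N
      induction N with
      | zero =>
        have hsub : {t | s <+: t} ⊆ A 0 := by
          intro t ht
          obtain ⟨l, rfl⟩ := ht
          cases l with
          | nil => left; simp
          | cons k l' =>
            right
            exact ⟨k, Nat.zero_le k, ⟨l', by simp⟩⟩
        exact top_le_iff.mp (hsbig ▸ hφ.2.1 _ _ hsub)
      | succ N ih =>
        refine top_of_subset hφ ih ?_ (hsmall N)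
        intro t ht
        rcases ht with rfl | ⟨k, hk, hpre⟩
        · left; left; rfl
        · rcases Nat.lt_or_ge k (N + 1) with h | h
          · have : k = N := Nat.le_antisymm (Nat.lt_succ_iff.mp h) hk
            right; rw [← this]; exact hpre
          · left; right; exact ⟨k, h, hpre⟩
    refine key hφ A hAtop ∅ Set.finite_empty ?_
    intro g _
    refine ⟨max s.length (g s.length), fun N hdN m hm => ?_⟩
    rcases hm with heq | ⟨k, hk, hpre⟩
    · have : m = s.length := by rw [← res_length g m, heq]
      rw [this]; exact le_max_left _ _
    · exfalso
      have hlm : s.length + 1 ≤ m := by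
        have := hpre.length_le
        simpa [res_length] using this
      have htake : (res g m).take (s.length + 1) = s ++ [k] := by
        have := List.prefix_iff_eq_take.mp hpre
        rw [this]; simp
      rw [res_prefix g hlm, res_succ] at htake
      have hinj := List.append_inj htake (by rw [res_length])
      have hgk : g s.length = k := by
        have := hinj.2; simpa using this
      have h1 : g s.length ≤ max s.length (g s.length) := le_max_right _ _
      rw [hgk] at h1
      exact absurd hk (by omega)
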